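/- arXiv:2504.02977 — 3 statements merged into one kernel-verified Lean document; each statement's English description precedes it below -/
import Mathlib

section
/- Let Y be an m×n zero-nonzero pattern and let G be a finite simple graph with a partition (V_1, V_2) according to Y. Let k be the smallest size of a zero forcing set F for G that forces from V_1 to V_2 (such a set always exists, e.g. F = V(G)). Then tri(Y) = m + n − k. -/
/-!  Common definitions: zero forcing (standard, loop, positive semidefinite),
zero-nonzero patterns, triangles, and related graph parameters. -/

variable {V : Type*}

/-- Standard zero forcing rule: with filled set `S`, the filled vertex `v` can force
its unique unfilled neighbor `u`. -/
def StdForce (G : SimpleGraph V) (S : Set V) (v u : V) : Prop :=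
  v ∈ S ∧ u ∉ S ∧ G.Adj v u ∧ ∀ w, G.Adj v w → w ∉ S → w = u

/-- Adjacency in the looping of `G` with loops at the vertices in `L`
(a vertex counts as its own neighbor iff it has a loop). -/
def LoopAdj (G : SimpleGraph V) (L : Set V) (v w : V) : Prop :=
  G.Adj v w ∨ (v = w ∧ v ∈ L)

/-- Loop zero forcing rule (the forcing vertex need not be filled): `v` can force `u`
if `u` is the only unfilled neighbor of `v` in the looping. -/
def LoopForce (G : SimpleGraph V) (L : Set V) (S : Set V) (v u : V) : Prop :=
  u ∉ S ∧ LoopAdj G L v u ∧ ∀ w, LoopAdj G L v w → w ∉ S → w = u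

/-- Positive semidefinite zero forcing rule: the filled vertex `v` can force the unfilled
vertex `u` if `u` is the only neighbor of `v` in the connected component of `u` of the
subgraph induced by the unfilled vertices. -/
def PsdForce (G : SimpleGraph V) (S : Set V) (v u : V) : Prop :=
  v ∈ S ∧ u ∉ S ∧ G.Adj v u ∧
    ∀ w, G.Adj v w → w ∉ S →
      Relation.ReflTransGen (fun a b => G.Adj a b ∧ a ∉ S ∧ b ∉ S) u w → w = u

/-- The vertices performing a force in a forcing sequence. -/
def sourcesOf (seq : List (V × V)) : Set V := {v | ∃ p ∈ seq, p.1 = v}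

/-- The vertices that get forced in a forcing sequence. -/
def targetsOf (seq : List (V × V)) : Set V := {u | ∃ p ∈ seq, p.2 = u}

/-- The filled set after performing all forces of `seq` starting from `F`. -/
def filledAfter (F : Set V) (seq : List (V × V)) : Set V := F ∪ targetsOf seq

/-- `ValidSeq rule seq F`: starting with `F` as the filled set, the sequence of forces
`seq` is permitted (each force in turn is allowed by `rule`, and each vertex forces
at most once). -/
def ValidSeq (rule : Set V → V → V → Prop) : List (V × V) → Set V → Prop
  | [], _ => True
  | (v, u) :: rest, F => rule F v u ∧ (∀ p ∈ rest, p.1 ≠ v) ∧ ValidSeq rule rest (insert u F)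

/-- `F` is a zero forcing set w.r.t. the forcing rule `rule`. -/
def IsZFSet (rule : Set V → V → V → Prop) (F : Set V) : Prop :=
  ∃ seq : List (V × V), ValidSeq rule seq F ∧ filledAfter F seq = Set.univ

/-- `F` is a zero forcing set (w.r.t. `rule`) from which `R` can be the set of vertices
that force: some (automatically complete) forcing sequence from `F` fills every vertex
and the set of vertices performing a force is exactly `R`. -/
def ForcesWith (rule : Set V → V → V → Prop) (F R : Set V) : Prop :=
  ∃ seq : List (V × V), ValidSeq rule seq F ∧ filledAfter F seq = Set.univ ∧
    sourcesOf seq = R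

/-- The zero forcing number w.r.t. a forcing rule. -/
noncomputable def Znum (rule : Set V → V → V → Prop) : ℕ :=
  sInf {n | ∃ F : Set V, IsZFSet rule F ∧ F.ncard = n}

/-- The (standard) zero forcing number `Z(G)`. -/
noncomputable def Z (G : SimpleGraph V) : ℕ := Znum (StdForce G)

/-- The zero forcing number of the looping of `G` with loops at `L`. -/
noncomputable def Zloop (G : SimpleGraph V) (L : Set V) : ℕ := Znum (LoopForce G L)

/-- The positive semidefinite zero forcing number `Z₊(G)`. -/
noncomputable def Zplus (G : SimpleGraph V) : ℕ := Znum (PsdForce G)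

/-- The enhanced zero forcing number `Ẑ(G)`: the maximum over all loopings of `G` of the
zero forcing number of the looping. -/
noncomputable def Zhat (G : SimpleGraph V) : ℕ := sSup {n | ∃ L : Set V, Zloop G L = n}

/-- `F` is a direct zero forcing set for `G`: some forcing sequence from `F` fills every
vertex and every vertex that performs a force belongs to `F`. -/
def IsDirectZFSet (G : SimpleGraph V) (F : Set V) : Prop :=
  ∃ seq : List (V × V), ValidSeq (StdForce G) seq F ∧ filledAfter F seq = Set.univ ∧
    sourcesOf seq ⊆ F

/-- The direct zero forcing number `Z_d(G)`. -/
noncomputable def Zd (G : SimpleGraph V) : ℕ :=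
  sInf {n | ∃ F : Set V, IsDirectZFSet G F ∧ F.ncard = n}

/-- A zero-nonzero pattern `Y` (entry `Y i j` means the `(i,j)` entry is `*`)
has a `k × k` submatrix that is a triangle. -/
def HasTriOfSize {ρ γ : Type*} (Y : ρ → γ → Prop) (k : ℕ) : Prop :=
  ∃ (r : Fin k → ρ) (c : Fin k → γ), Function.Injective r ∧ Function.Injective c ∧
    (∀ i, Y (r i) (c i)) ∧ ∀ i j : Fin k, i < j → ¬ Y (r i) (c j)

/-- The triangle number `tri(Y)` of a zero-nonzero pattern. -/
noncomputable def tri {ρ γ : Type*} (Y : ρ → γ → Prop) : ℕ := sSup {k | HasTriOfSize Y k}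

/-- Membership in `S_znz(G)`: off the diagonal, the pattern matches the adjacency of `G`. -/
def InSznz (G : SimpleGraph V) (A : V → V → Prop) : Prop :=
  ∀ i j : V, i ≠ j → (A i j ↔ G.Adj i j)

/-- The zero-nonzero pattern of the looping of `G` with loops at `L`. -/
def loopPattern (G : SimpleGraph V) (L : Set V) : V → V → Prop :=
  fun i j => (i = j ∧ i ∈ L) ∨ (i ≠ j ∧ G.Adj i j)

/-- The submatrix of the pattern `Y` with rows `R` and columns `C` is a triangle:
there are enumerations of `R` and `C` realizing a lower-triangular pattern with `*`
diagonal (in particular `|R| = |C|`). -/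
def SubIsTriangle {ρ γ : Type*} (Y : ρ → γ → Prop) (R : Finset ρ) (C : Finset γ) : Prop :=
  ∃ (k : ℕ) (r : Fin k → ρ) (c : Fin k → γ),
    Function.Injective r ∧ Function.Injective c ∧
    (∀ x : ρ, x ∈ R ↔ ∃ i, r i = x) ∧ (∀ y : γ, y ∈ C ↔ ∃ i, c i = y) ∧
    (∀ i, Y (r i) (c i)) ∧ ∀ i j : Fin k, i < j → ¬ Y (r i) (c j)

/-- `(R, C)` is a persistent triangle of `G`. -/
def PersistentTriangle (G : SimpleGraph V) (R C : Finset V) : Prop :=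
  ∀ A : V → V → Prop, InSznz G A → SubIsTriangle A R C

/-- `F` is a direct zero forcing set for `G` from which `R` can be the set of vertices
that force. -/
def DirectForcesWith (G : SimpleGraph V) (F R : Set V) : Prop :=
  ∃ seq : List (V × V), ValidSeq (StdForce G) seq F ∧ filledAfter F seq = Set.univ ∧
    sourcesOf seq = R ∧ R ⊆ F

/-- `(range r, range c)` is a partition of `G` according to the `m × n` pattern `Y`,
with labelings given by `r` and `c`. -/
def PartitionAccording (G : SimpleGraph V) {m n : ℕ} (Y : Fin m → Fin n → Prop)
    (r : Fin m → V) (c : Fin n → V) : Prop :=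
  Function.Injective r ∧ Function.Injective c ∧ (∀ i j, r i ≠ c j) ∧
    (∀ v : V, (∃ i, r i = v) ∨ (∃ j, c j = v)) ∧
    ∀ i j, G.Adj (r i) (c j) ↔ Y i j

/-- `F` is a zero forcing set for `G` that forces from `V1` to `V2`. -/
def ForcesFromTo (G : SimpleGraph V) (F V1 V2 : Set V) : Prop :=
  V1 ⊆ F ∧ ∃ seq : List (V × V), ValidSeq (StdForce G) seq F ∧
    filledAfter F seq = Set.univ ∧ sourcesOf seq ⊆ V1 ∧ targetsOf seq ⊆ V2

/-- `(V1, V2)` is a partition of the vertex set of `G` into two cliques. -/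
def IsCliquePartition (G : SimpleGraph V) (V1 V2 : Set V) : Prop :=
  Disjoint V1 V2 ∧ V1 ∪ V2 = Set.univ ∧ G.IsClique V1 ∧ G.IsClique V2

/-- `G` is cobipartite. -/
def Cobipartite (G : SimpleGraph V) : Prop := ∃ V1 V2 : Set V, IsCliquePartition G V1 V2

/-- `G` is the cobipartite graph associated with the pattern `Y`, via labelings `r`, `c`. -/
def CobipAssociated (G : SimpleGraph V) {m n : ℕ} (Y : Fin m → Fin n → Prop)
    (r : Fin m → V) (c : Fin n → V) : Prop :=
  PartitionAccording G Y r c ∧ G.IsClique (Set.range r) ∧ G.IsClique (Set.range c)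

/-- `z` is a critical vertex: some optimal forcing sequence neither lets `z` force
nor forces `z`. -/
def Critical (G : SimpleGraph V) (z : V) : Prop :=
  ∃ (F : Set V) (seq : List (V × V)), F.ncard = Z G ∧ ValidSeq (StdForce G) seq F ∧
    filledAfter F seq = Set.univ ∧ z ∉ sourcesOf seq ∧ z ∉ targetsOf seq

/-- `z` is an uncritical vertex: in every optimal forcing sequence, exactly one of the
following holds: `z` performs a force, or `z` gets forced. -/
def Uncritical (G : SimpleGraph V) (z : V) : Prop :=
  ∀ (F : Set V) (seq : List (V × V)), F.ncard = Z G → ValidSeq (StdForce G) seq F →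
    filledAfter F seq = Set.univ → (z ∈ sourcesOf seq ↔ z ∉ targetsOf seq)

/-- The maximum nullity `M(G)` over the field `𝔽`. -/
noncomputable def Mnum (𝔽 : Type*) [Field 𝔽] [Fintype V] [DecidableEq V]
    (G : SimpleGraph V) : ℕ :=
  sSup {k | ∃ A : Matrix V V 𝔽, A.IsSymm ∧ (∀ i j : V, i ≠ j → (A i j ≠ 0 ↔ G.Adj i j)) ∧
    k = Fintype.card V - A.rank}

/-- The minimum rank `mr_𝔽(Y)` of a zero-nonzero pattern over the field `𝔽`. -/
noncomputable def mr (𝔽 : Type*) [Field 𝔽] {m n : ℕ} (Y : Fin m → Fin n → Prop) : ℕ :=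
  sInf {k | ∃ A : Matrix (Fin m) (Fin n) 𝔽, (∀ i j, A i j ≠ 0 ↔ Y i j) ∧ A.rank = k}

/-- `G` is a `k`-tree: there is a construction ordering of the vertices in which the
first `k+1` vertices form a clique and every later vertex is adjacent among the earlier
vertices to exactly a `k`-clique. -/
def IsKTree (k : ℕ) [Fintype V] (G : SimpleGraph V) : Prop :=
  k + 1 ≤ Fintype.card V ∧ ∃ ord : V ≃ Fin (Fintype.card V),
    (∀ u v : V, (ord u : ℕ) < k + 1 → (ord v : ℕ) < k + 1 → u ≠ v → G.Adj u v) ∧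
    ∀ v : V, k + 1 ≤ (ord v : ℕ) →
      G.IsClique {u : V | (ord u : ℕ) < (ord v : ℕ) ∧ G.Adj u v} ∧
      {u : V | (ord u : ℕ) < (ord v : ℕ) ∧ G.Adj u v}.ncard = k

/-! The forces `(v₁, u₁), …, (v_t, u_t)` of a forcing sequence from `V₁` to `V₂` are the
diagonal of a `t × t` triangle of `Y`: `v_i` is adjacent to `u_i` but not to `u_j` for
`j > i`, because `u_j` is still unfilled when `v_i` forces. Conversely, once everything but
the columns of a triangle is filled, its rows force its columns in order. In both cases `F`
is the complement of the `t` forced vertices, so `|F| = m + n - t`. -/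

section TriangleList

variable {ρ γ ρ' γ' : Type*}

/-- The diagonal cells of a triangle, listed from the top row down. -/
def IsTriangleList (Y : ρ → γ → Prop) (l : List (ρ × γ)) : Prop :=
  (∀ p ∈ l, Y p.1 p.2) ∧ l.Pairwise (fun p q => p.1 ≠ q.1 ∧ p.2 ≠ q.2 ∧ ¬ Y p.1 q.2)

theorem hasTriOfSize_iff_exists_isTriangleList (Y : ρ → γ → Prop) (k : ℕ) :
    HasTriOfSize Y k ↔ ∃ l, IsTriangleList Y l ∧ l.length = k := by
  constructor
  · rintro ⟨r, c, hr, hc, hdiag, hoff⟩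
    refine ⟨List.ofFn fun i => (r i, c i), ⟨?_, ?_⟩, List.length_ofFn⟩
    · exact List.forall_mem_ofFn_iff.mpr hdiag
    · exact List.pairwise_ofFn.mpr fun i j hij =>
        ⟨hr.ne hij.ne, hc.ne hij.ne, hoff i j hij⟩
  · rintro ⟨l, ⟨hdiag, hpw⟩, rfl⟩
    have hoff := List.pairwise_iff_get.mp hpw
    have hne : ∀ i j, i ≠ j → (l.get i).1 ≠ (l.get j).1 ∧ (l.get i).2 ≠ (l.get j).2 := by
      intro i j hij
      rcases hij.lt_or_gt with h | h
      · exact ⟨(hoff i j h).1, (hoff i j h).2.1⟩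
      · exact ⟨(hoff j i h).1.symm, (hoff j i h).2.1.symm⟩
    refine ⟨fun i => (l.get i).1, fun i => (l.get i).2, ?_, ?_,
      fun i => hdiag _ (List.get_mem l i), fun i j hij => (hoff i j hij).2.2⟩
    · exact fun i j h => by_contra fun hij => (hne i j hij).1 h
    · exact fun i j h => by_contra fun hij => (hne i j hij).2 h

theorem IsTriangleList.nodup_map_snd {Y : ρ → γ → Prop} {l : List (ρ × γ)}
    (h : IsTriangleList Y l) : (l.map Prod.snd).Nodup :=
  List.pairwise_map.mpr (h.2.imp fun hpq => hpq.2.1)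

theorem isTriangleList_map_iff {Y : ρ → γ → Prop} {Y' : ρ' → γ' → Prop} {f : ρ → ρ'}
    {g : γ → γ'} (hf : Function.Injective f) (hg : Function.Injective g)
    (hY : ∀ i j, Y' (f i) (g j) ↔ Y i j) (l : List (ρ × γ)) :
    IsTriangleList Y' (l.map (Prod.map f g)) ↔ IsTriangleList Y l := by
  simp only [IsTriangleList, List.forall_mem_map, List.pairwise_map, Prod.map_fst,
    Prod.map_snd, hf.ne_iff, hg.ne_iff, hY]

theorem HasTriOfSize.le_card [Fintype ρ] {Y : ρ → γ → Prop} {k : ℕ} (h : HasTriOfSize Y k) :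
    k ≤ Fintype.card ρ := by
  obtain ⟨r, -, hr, -⟩ := h
  simpa using Fintype.card_le_of_injective r hr

theorem hasTriOfSize_zero (Y : ρ → γ → Prop) : HasTriOfSize Y 0 :=
  ⟨Fin.elim0, Fin.elim0, fun i => i.elim0, fun i => i.elim0, fun i => i.elim0,
    fun i => i.elim0⟩

theorem bddAbove_hasTriOfSize [Fintype ρ] (Y : ρ → γ → Prop) :
    BddAbove {k | HasTriOfSize Y k} :=
  ⟨Fintype.card ρ, fun _ h => h.le_card⟩

theorem hasTriOfSize_tri [Fintype ρ] (Y : ρ → γ → Prop) : HasTriOfSize Y (tri Y) :=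
  Nat.sSup_mem ⟨0, hasTriOfSize_zero Y⟩ (bddAbove_hasTriOfSize Y)

theorem HasTriOfSize.le_tri [Fintype ρ] {Y : ρ → γ → Prop} {k : ℕ} (h : HasTriOfSize Y k) :
    k ≤ tri Y :=
  le_csSup (bddAbove_hasTriOfSize Y) h

end TriangleList

section Forcing

variable {G : SimpleGraph V}

@[simp]
theorem sourcesOf_cons (p : V × V) (l : List (V × V)) :
    sourcesOf (p :: l) = insert p.1 (sourcesOf l) := by
  ext v
  simp [sourcesOf, eq_comm]

@[simp]
theorem targetsOf_cons (p : V × V) (l : List (V × V)) :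
    targetsOf (p :: l) = insert p.2 (targetsOf l) := by
  ext v
  simp [targetsOf, eq_comm]

theorem ncard_targetsOf {l : List (V × V)} (hl : (l.map Prod.snd).Nodup) :
    (targetsOf l).ncard = l.length := by
  classical
  have : targetsOf l = ↑(l.map Prod.snd).toFinset := by
    ext u
    simp [targetsOf]
  rw [this, Set.ncard_coe_finset, List.toFinset_card_of_nodup hl, List.length_map]

theorem ValidSeq.isTriangleList :
    ∀ {seq : List (V × V)} {F : Set V}, ValidSeq (StdForce G) seq F →
      IsTriangleList G.Adj seq ∧ Disjoint F (targetsOf seq)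
  | [], _, _ => ⟨⟨by simp, List.Pairwise.nil⟩, by simp [targetsOf]⟩
  | (v, u) :: rest, F, ⟨⟨_, huF, hvu, huniq⟩, hdistinct, hrest⟩ => by
    obtain ⟨⟨hdiag, hpw⟩, hdisj⟩ := hrest.isTriangleList
    have hlater : ∀ q ∈ rest, q.2 ∉ insert u F := fun q hq =>
      Set.disjoint_right.mp hdisj ⟨q, hq, rfl⟩
    refine ⟨⟨?_, List.Pairwise.cons (fun q hq => ⟨(hdistinct q hq).symm, ?_, ?_⟩) hpw⟩, ?_⟩
    · exact List.forall_mem_cons.mpr ⟨hvu, hdiag⟩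
    · exact fun h => hlater q hq (h ▸ Set.mem_insert u F)
    · exact fun hadj => hlater q hq
        (huniq _ hadj (fun h => hlater q hq (Set.mem_insert_of_mem u h)) ▸ Set.mem_insert u F)
    · rw [targetsOf_cons, Set.disjoint_insert_right]
      exact ⟨huF, hdisj.mono_left (Set.subset_insert u F)⟩

theorem IsTriangleList.validSeq :
    ∀ {seq : List (V × V)} {F : Set V}, IsTriangleList G.Adj seq → sourcesOf seq ⊆ F →
      Disjoint F (targetsOf seq) → filledAfter F seq = Set.univ → ValidSeq (StdForce G) seq F
  | [], _, _, _, _, _ => trivial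
  | (v, u) :: rest, F, ⟨hdiag, hpw⟩, hsrc, hdisj, hfill => by
    simp only [List.forall_mem_cons, List.pairwise_cons] at hdiag hpw
    simp only [sourcesOf_cons, Set.insert_subset_iff] at hsrc
    rw [targetsOf_cons, Set.disjoint_insert_right] at hdisj
    refine ⟨⟨hsrc.1, hdisj.1, hdiag.1, fun w hw hwF => ?_⟩, fun q hq => (hpw.1 q hq).1.symm,
      IsTriangleList.validSeq ⟨hdiag.2, hpw.2⟩ (hsrc.2.trans (Set.subset_insert u F)) ?_ ?_⟩
    · have hw' : w ∈ filledAfter F ((v, u) :: rest) := hfill ▸ Set.mem_univ w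
      simp only [filledAfter, targetsOf_cons, Set.mem_union, Set.mem_insert_iff] at hw'
      rcases hw' with hwF' | rfl | ⟨q, hq, rfl⟩
      · exact absurd hwF' hwF
      · rfl
      · exact absurd hw (hpw.1 q hq).2.2
    · rw [Set.disjoint_insert_left]
      exact ⟨fun ⟨q, hq, hqu⟩ => (hpw.1 q hq).2.1 hqu.symm, hdisj.2⟩
    · rw [← hfill]
      ext w
      simp only [filledAfter, targetsOf_cons, Set.mem_union, Set.mem_insert_iff]
      tauto

end Forcing

section Partition

variable {m n : ℕ} {Y : Fin m → Fin n → Prop} {G : SimpleGraph V} {r : Fin m → V}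
  {c : Fin n → V}

theorem PartitionAccording.range_union_range (hpart : PartitionAccording G Y r c) :
    Set.range r ∪ Set.range c = Set.univ :=
  Set.eq_univ_of_forall hpart.2.2.2.1

theorem PartitionAccording.disjoint_range (hpart : PartitionAccording G Y r c) :
    Disjoint (Set.range r) (Set.range c) :=
  Set.disjoint_range_iff.mpr hpart.2.2.1

theorem PartitionAccording.ncard_add_ncard {F T : Set V} (hpart : PartitionAccording G Y r c)
    (hdisj : Disjoint F T) (hunion : F ∪ T = Set.univ) : F.ncard + T.ncard = m + n := by
  have hfin : (Set.univ : Set V).Finite := by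
    rw [← hpart.range_union_range]
    exact (Set.finite_range r).union (Set.finite_range c)
  rw [← Set.ncard_union_eq hdisj (hfin.subset (Set.subset_univ F))
    (hfin.subset (Set.subset_univ T)), hunion, ← hpart.range_union_range,
    Set.ncard_union_eq hpart.disjoint_range, Set.ncard_range_of_injective hpart.1,
    Set.ncard_range_of_injective hpart.2.1, Nat.card_fin, Nat.card_fin]

theorem PartitionAccording.isTriangleList_map_iff (hpart : PartitionAccording G Y r c)
    (l : List (Fin m × Fin n)) :
    IsTriangleList G.Adj (l.map (Prod.map r c)) ↔ IsTriangleList Y l :=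
  _root_.isTriangleList_map_iff hpart.1 hpart.2.1 hpart.2.2.2.2 l

theorem PartitionAccording.exists_forcesFromTo (hpart : PartitionAccording G Y r c) {t : ℕ}
    (ht : HasTriOfSize Y t) :
    ∃ F, ForcesFromTo G F (Set.range r) (Set.range c) ∧ F.ncard + t = m + n := by
  obtain ⟨l, hl, rfl⟩ := (hasTriOfSize_iff_exists_isTriangleList Y t).mp ht
  set seq := l.map (Prod.map r c)
  have htri : IsTriangleList G.Adj seq := (hpart.isTriangleList_map_iff l).mpr hl
  have hsrc : sourcesOf seq ⊆ Set.range r := by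
    rintro _ ⟨p, hp, rfl⟩
    obtain ⟨q, -, rfl⟩ := List.mem_map.mp hp
    exact ⟨q.1, rfl⟩
  have htgt : targetsOf seq ⊆ Set.range c := by
    rintro _ ⟨p, hp, rfl⟩
    obtain ⟨q, -, rfl⟩ := List.mem_map.mp hp
    exact ⟨q.2, rfl⟩
  have hrF : Set.range r ⊆ (targetsOf seq)ᶜ := fun _ hv hvT =>
    Set.disjoint_left.mp hpart.disjoint_range hv (htgt hvT)
  have hfill : filledAfter (targetsOf seq)ᶜ seq = Set.univ := Set.compl_union_self _
  refine ⟨(targetsOf seq)ᶜ, ⟨hrF, seq, htri.validSeq (hsrc.trans hrF) disjoint_compl_left hfill,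
    hfill, hsrc, htgt⟩, ?_⟩
  rw [← List.length_map (Prod.map r c), ← ncard_targetsOf htri.nodup_map_snd]
  exact hpart.ncard_add_ncard disjoint_compl_left hfill

theorem PartitionAccording.exists_hasTriOfSize (hpart : PartitionAccording G Y r c) {F : Set V}
    (hF : ForcesFromTo G F (Set.range r) (Set.range c)) :
    ∃ t, HasTriOfSize Y t ∧ F.ncard + t = m + n := by
  obtain ⟨-, seq, hvalid, hfill, hsrc, htgt⟩ := hF
  obtain ⟨htri, hdisj⟩ := hvalid.isTriangleList
  have hrange : seq ∈ Set.range (List.map (Prod.map r c)) := by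
    rw [Set.range_list_map, Set.range_prodMap]
    exact fun p hp => ⟨hsrc ⟨p, hp, rfl⟩, htgt ⟨p, hp, rfl⟩⟩
  obtain ⟨l, rfl⟩ := hrange
  refine ⟨l.length, (hasTriOfSize_iff_exists_isTriangleList Y _).mpr
    ⟨l, (hpart.isTriangleList_map_iff l).mp htri, rfl⟩, ?_⟩
  rw [← List.length_map (Prod.map r c), ← ncard_targetsOf htri.nodup_map_snd]
  exact hpart.ncard_add_ncard hdisj hfill

end Partition

theorem tri_eq_of_partition_according_general
    {V : Type*} {m n : ℕ} (Y : Fin m → Fin n → Prop)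
    (G : SimpleGraph V) (r : Fin m → V) (c : Fin n → V)
    (hpart : PartitionAccording G Y r c) :
    tri Y = m + n -
      sInf {k | ∃ F : Set V,
        ForcesFromTo G F (Set.range r) (Set.range c) ∧ F.ncard = k} := by
  have htri_le : tri Y ≤ m := by simpa using (hasTriOfSize_tri Y).le_card
  obtain ⟨F₀, hF₀, hcard₀⟩ := hpart.exists_forcesFromTo (hasTriOfSize_tri Y)
  have hleast : IsLeast {k | ∃ F : Set V,
      ForcesFromTo G F (Set.range r) (Set.range c) ∧ F.ncard = k} (m + n - tri Y) := by
    refine ⟨⟨F₀, hF₀, by omega⟩, ?_⟩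
    rintro _ ⟨F, hF, rfl⟩
    obtain ⟨t, ht, hcard⟩ := hpart.exists_hasTriOfSize hF
    have hle := ht.le_tri
    omega
  rw [hleast.csInf_eq]
  omega

/-- If `(V₁, V₂)` is a partition of `G` according to the `m × n`
pattern `Y` and `k` is the smallest size of a zero forcing set for `G` that forces from
`V₁` to `V₂`, then `tri(Y) = m + n − k`. -/
theorem tri_eq_of_partition_according
    {V : Type*} [Fintype V] [DecidableEq V] {m n : ℕ} (Y : Fin m → Fin n → Prop)
    (G : SimpleGraph V) (r : Fin m → V) (c : Fin n → V)
    (hpart : PartitionAccording G Y r c) :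
    tri Y = m + n -
      sInf {k | ∃ F : Set V,
        ForcesFromTo G F (Set.range r) (Set.range c) ∧ F.ncard = k} :=
  tri_eq_of_partition_according_general Y G r c hpart
end

section
/- Let Y be an m×n zero-nonzero pattern and let G be the cobipartite graph associated with Y. If G is saturated with respect to the corresponding clique partition, then Z(G) = m + n − tri(Y). -/
/-!  Common definitions: zero forcing (standard, loop, positive semidefinite),
zero-nonzero patterns, triangles, and related graph parameters. -/

variable {V : Type*}

/-! A complete forcing process from `F`, read as its list of forces `v t → u t`, is a chain in
which `u s` is neither `v t` nor adjacent to it whenever `t < s` (it was still unfilled when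
`v t` forced); its targets are exactly the complement of `F`, and conversely the targets of any
such chain can be forced from their complement. Hence `Z(G) = |V| - N` with `N` the longest
chain. In the cobipartite graph of `Y` the two sides are cliques, so `v t` and `u s` (`t < s`)
lie on opposite sides: up to transposition all `v t` but the last are rows and all `u s` but the
first are columns, and saturation replaces the two exceptional ends. Such a chain is exactly a
triangle of `Y`, so `N = tri(Y)`. -/

section ForcingChain

variable (G : SimpleGraph V)

def IsForcingChain {k : ℕ} (v u : Fin k → V) : Prop :=
  (∀ t, G.Adj (v t) (u t)) ∧ ∀ t s, t < s → v t ≠ u s ∧ ¬ G.Adj (v t) (u s)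

variable {G}

lemma IsForcingChain.injective_snd {k : ℕ} {v u : Fin k → V} (h : IsForcingChain G v u) :
    Function.Injective u := by
  intro t s hts
  by_contra hne
  rcases lt_or_gt_of_ne hne with hlt | hlt
  · exact (h.2 t s hlt).2 (hts ▸ h.1 t)
  · exact (h.2 s t hlt).2 (hts ▸ h.1 s)

lemma IsForcingChain.map {W : Type*} {H : SimpleGraph W} (f : G ↪g H) {k : ℕ}
    {v u : Fin k → V} (h : IsForcingChain G v u) : IsForcingChain H (f ∘ v) (f ∘ u) :=
  ⟨fun t => f.map_adj_iff.mpr (h.1 t), fun t s hts =>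
    ⟨f.injective.ne (h.2 t s hts).1, f.map_adj_iff.not.mpr (h.2 t s hts).2⟩⟩

lemma setOf_isForcingChain_congr {W : Type*} {H : SimpleGraph W} (e : G ≃g H) :
    {k | ∃ v u : Fin k → V, IsForcingChain G v u} =
      {k | ∃ v u : Fin k → W, IsForcingChain H v u} := by
  ext k
  exact ⟨fun ⟨v, u, h⟩ => ⟨_, _, h.map e.toEmbedding⟩,
    fun ⟨v, u, h⟩ => ⟨_, _, h.map e.symm.toEmbedding⟩⟩

lemma ValidSeq.snd_notMem {seq : List (V × V)} {F : Set V}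
    (h : ValidSeq (StdForce G) seq F) : ∀ p ∈ seq, p.2 ∉ F := by
  induction seq generalizing F with
  | nil => simp
  | cons p rest ih =>
    obtain ⟨v, u⟩ := p
    intro q hq
    rcases List.mem_cons.mp hq with rfl | hq
    · exact h.1.2.1
    · exact fun hqF => ih h.2.2 q hq (Set.mem_insert_of_mem u hqF)

lemma ValidSeq.adj {seq : List (V × V)} {F : Set V}
    (h : ValidSeq (StdForce G) seq F) : ∀ p ∈ seq, G.Adj p.1 p.2 := by
  induction seq generalizing F with
  | nil => simp
  | cons p rest ih =>
    obtain ⟨v, u⟩ := p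
    intro q hq
    rcases List.mem_cons.mp hq with rfl | hq
    · exact h.1.2.2.1
    · exact ih h.2.2 q hq

lemma ValidSeq.pairwise {seq : List (V × V)} {F : Set V}
    (h : ValidSeq (StdForce G) seq F) :
    seq.Pairwise fun p q => p.1 ≠ q.2 ∧ ¬ G.Adj p.1 q.2 := by
  induction seq generalizing F with
  | nil => exact List.Pairwise.nil
  | cons p rest ih =>
    obtain ⟨v, u⟩ := p
    obtain ⟨⟨hvF, -, -, hunique⟩, -, hrest⟩ := h
    refine List.pairwise_cons.mpr ⟨fun q hq => ?_, ih hrest⟩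
    have hq2 : q.2 ∉ insert u F := hrest.snd_notMem q hq
    exact ⟨fun hvq => hq2 (Or.inr (hvq ▸ hvF)),
      fun hadj => hq2 (Or.inl (hunique q.2 hadj fun hqF => hq2 (Or.inr hqF)))⟩

lemma ValidSeq.isForcingChain {seq : List (V × V)} {F : Set V}
    (h : ValidSeq (StdForce G) seq F) :
    IsForcingChain G (fun t => (seq.get t).1) (fun t => (seq.get t).2) :=
  ⟨fun t => h.adj _ (seq.get_mem t), fun _ _ hts => List.pairwise_iff_get.mp h.pairwise _ _ hts⟩

lemma validSeq_compl_targetsOf {seq : List (V × V)} (hadj : ∀ p ∈ seq, G.Adj p.1 p.2)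
    (hpw : seq.Pairwise fun p q => p.1 ≠ q.2 ∧ ¬ G.Adj p.1 q.2) :
    ValidSeq (StdForce G) seq (targetsOf seq)ᶜ := by
  induction seq with
  | nil => trivial
  | cons p rest ih =>
    obtain ⟨v, u⟩ := p
    obtain ⟨hhead, hpw⟩ := List.pairwise_cons.mp hpw
    have hvu : G.Adj v u := hadj _ List.mem_cons_self
    have htargets : targetsOf ((v, u) :: rest) = insert u (targetsOf rest) := by
      ext x
      simp [targetsOf, eq_comm]
    have hu : u ∉ targetsOf rest := by
      rintro ⟨q, hq, rfl⟩
      exact (hhead q hq).2 hvu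
    refine ⟨⟨?_, ?_, hvu, ?_⟩, ?_, ?_⟩
    · rw [htargets]
      rintro (hv | ⟨q, hq, rfl⟩)
      · exact hvu.ne hv
      · exact (hhead q hq).1 rfl
    · simp [htargets]
    · intro w hvw hw
      rw [htargets, Set.notMem_compl_iff] at hw
      rcases hw with rfl | ⟨q, hq, rfl⟩
      · rfl
      · exact absurd hvw (hhead q hq).2
    · intro q hq hqv
      exact (hhead q hq).2 (hqv ▸ hadj q (List.mem_cons_of_mem _ hq))
    · have hfilled : insert u (targetsOf ((v, u) :: rest))ᶜ = (targetsOf rest)ᶜ := by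
        ext x
        rw [htargets]
        by_cases hx : x = u
        · simp [hx, hu]
        · simp [hx]
      rw [hfilled]
      exact ih (fun q hq => hadj q (List.mem_cons_of_mem _ hq)) hpw

end ForcingChain

section ZeroForcingNumber

variable {G : SimpleGraph V}

lemma exists_isForcingChain_of_isZFSet [Finite V] {F : Set V} (hF : IsZFSet (StdForce G) F) :
    ∃ (k : ℕ) (v u : Fin k → V), IsForcingChain G v u ∧ F.ncard + k = Nat.card V := by
  obtain ⟨seq, hvalid, hfilled⟩ := hF
  have hchain := hvalid.isForcingChain
  refine ⟨seq.length, _, _, hchain, ?_⟩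
  have hrange : Set.range (fun t => (seq.get t).2) = Fᶜ := by
    ext x
    constructor
    · rintro ⟨t, rfl⟩
      exact hvalid.snd_notMem _ (seq.get_mem t)
    · intro hx
      have hx' : x ∈ filledAfter F seq := hfilled ▸ Set.mem_univ x
      obtain ⟨p, hp, rfl⟩ := hx'.resolve_left hx
      obtain ⟨t, rfl⟩ := List.mem_iff_get.mp hp
      exact ⟨t, rfl⟩
  rw [← Set.ncard_add_ncard_compl F, ← hrange, Set.ncard_range_of_injective hchain.injective_snd,
    Nat.card_fin]

lemma IsForcingChain.isZFSet_compl_range {k : ℕ} {v u : Fin k → V}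
    (h : IsForcingChain G v u) : IsZFSet (StdForce G) (Set.range u)ᶜ := by
  have htargets : targetsOf (List.ofFn fun t => (v t, u t)) = Set.range u := by
    ext x
    simp [targetsOf, List.mem_ofFn]
  have hvalid : ValidSeq (StdForce G) (List.ofFn fun t => (v t, u t)) _ :=
    validSeq_compl_targetsOf (by simpa [List.mem_ofFn] using h.1)
      (List.pairwise_ofFn.mpr fun t s hts => h.2 t s hts)
  rw [htargets] at hvalid
  exact ⟨_, hvalid, by rw [filledAfter, htargets, Set.compl_union_self]⟩

theorem Z_eq_card_sub_of_isGreatest [Finite V] {N : ℕ}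
    (hN : IsGreatest {k | ∃ v u : Fin k → V, IsForcingChain G v u} N) :
    Z G = Nat.card V - N := by
  obtain ⟨⟨v, u, hchain⟩, hmax⟩ := hN
  have hcard : (Set.range u)ᶜ.ncard = Nat.card V - N := by
    rw [← Set.ncard_add_ncard_compl (Set.range u), Set.ncard_range_of_injective
      hchain.injective_snd, Nat.card_fin, Nat.add_sub_cancel_left]
  have hmem : Nat.card V - N ∈ {s | ∃ F : Set V, IsZFSet (StdForce G) F ∧ F.ncard = s} :=
    ⟨_, hchain.isZFSet_compl_range, hcard⟩
  refine le_antisymm (Nat.sInf_le hmem) (le_csInf ⟨_, hmem⟩ ?_)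
  rintro s ⟨F, hF, rfl⟩
  obtain ⟨k, v', u', hchain', hk⟩ := exists_isForcingChain_of_isZFSet hF
  have := hmax ⟨v', u', hchain'⟩
  omega

end ZeroForcingNumber

section Triangle

variable {ρ γ : Type*} {Y : ρ → γ → Prop}

lemma hasTriOfSize_of_lower {k : ℕ} (r : Fin k → ρ) (c : Fin k → γ)
    (hdiag : ∀ i, Y (r i) (c i)) (hlower : ∀ i j, i < j → ¬ Y (r i) (c j)) :
    HasTriOfSize Y k := by
  refine ⟨r, c, fun i j hij => ?_, fun i j hij => ?_, hdiag, hlower⟩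
  · by_contra hne
    rcases lt_or_gt_of_ne hne with hlt | hlt
    · exact hlower i j hlt (hij ▸ hdiag j)
    · exact hlower j i hlt (hij ▸ hdiag i)
  · by_contra hne
    rcases lt_or_gt_of_ne hne with hlt | hlt
    · exact hlower i j hlt (hij ▸ hdiag i)
    · exact hlower j i hlt (hij ▸ hdiag j)

lemma hasTriOfSize_zero_s12 : HasTriOfSize Y 0 :=
  hasTriOfSize_of_lower Fin.elim0 Fin.elim0 (fun i => i.elim0) fun i => i.elim0

lemma HasTriOfSize.of_flip {k : ℕ} (h : HasTriOfSize (flip Y) k) : HasTriOfSize Y k := by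
  obtain ⟨r, c, -, -, hdiag, hlower⟩ := h
  exact hasTriOfSize_of_lower (c ∘ Fin.rev) (r ∘ Fin.rev) (fun i => hdiag i.rev)
    fun i j hij => hlower j.rev i.rev (Fin.rev_lt_rev.mpr hij)

lemma isGreatest_tri [Finite ρ] : IsGreatest {k | HasTriOfSize Y k} (tri Y) := by
  have hbdd : BddAbove {k | HasTriOfSize Y k} :=
    ⟨Nat.card ρ, fun k ⟨r, _, hr, _⟩ => by
      simpa using Nat.card_le_card_of_injective r hr⟩
  exact ⟨Nat.sSup_mem ⟨0, hasTriOfSize_zero_s12⟩ hbdd, fun _ hk => le_csSup hbdd hk⟩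

end Triangle

section CobipGraph

variable {ρ γ : Type*}

def cobipGraph (Y : ρ → γ → Prop) : SimpleGraph (ρ ⊕ γ) where
  Adj
    | .inl a, .inl a' => a ≠ a'
    | .inl a, .inr b => Y a b
    | .inr b, .inl a => Y a b
    | .inr b, .inr b' => b ≠ b'

variable {Y : ρ → γ → Prop}

lemma cobipGraph_adj_of_isLeft_eq {x y : ρ ⊕ γ} (hxy : x ≠ y) (h : x.isLeft = y.isLeft) :
    (cobipGraph Y).Adj x y := by
  rcases x with a | b <;> rcases y with a' | b'
  · exact fun ha => hxy (congrArg _ ha)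
  · exact absurd h (by simp)
  · exact absurd h (by simp)
  · exact fun hb => hxy (congrArg _ hb)

def cobipGraphIsoFlip (Y : ρ → γ → Prop) : cobipGraph Y ≃g cobipGraph (flip Y) where
  toEquiv := Equiv.sumComm ρ γ
  map_rel_iff' := by
    rintro (a | b) (a' | b') <;> rfl

lemma exists_entry_of_cobipGraph_adj (hrow : ∀ a, ∃ b, Y a b) (hcol : ∀ b, ∃ a, Y a b)
    {x y : ρ ⊕ γ} (hxy : (cobipGraph Y).Adj x y) :
    ∃ a b, Y a b ∧ (x.isLeft → x = .inl a) ∧ (y.isRight → y = .inr b) := by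
  rcases x with a | b <;> rcases y with a' | b'
  · obtain ⟨b, hb⟩ := hrow a
    exact ⟨a, b, hb, fun _ => rfl, by simp⟩
  · exact ⟨a, b', hxy, fun _ => rfl, fun _ => rfl⟩
  · exact ⟨a', b, hxy, by simp, by simp⟩
  · obtain ⟨a, ha⟩ := hcol b'
    exact ⟨a, b', ha, by simp, fun _ => rfl⟩

lemma HasTriOfSize.exists_isForcingChain {k : ℕ} (h : HasTriOfSize Y k) :
    ∃ v u : Fin k → ρ ⊕ γ, IsForcingChain (cobipGraph Y) v u := by
  obtain ⟨r, c, -, -, hdiag, hlower⟩ := h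
  exact ⟨Sum.inl ∘ r, Sum.inr ∘ c, hdiag, fun t s hts => ⟨Sum.inl_ne_inr, hlower t s hts⟩⟩

lemma hasTriOfSize_of_isForcingChain_of_isLeft (hrow : ∀ a, ∃ b, Y a b)
    (hcol : ∀ b, ∃ a, Y a b) {k : ℕ} {v u : Fin (k + 1) → ρ ⊕ γ}
    (h : IsForcingChain (cobipGraph Y) v u) (h0 : (v 0).isLeft) : HasTriOfSize Y (k + 1) := by
  have hsides : ∀ t s, t < s → (v t).isLeft ≠ (u s).isLeft := fun t s hts heq =>
    (h.2 t s hts).2 (cobipGraph_adj_of_isLeft_eq (h.2 t s hts).1 heq)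
  have hu : ∀ s, 0 < s → (u s).isRight := fun s hs => by
    simpa [h0] using hsides 0 s hs
  have hv : ∀ t, t < Fin.last k → (v t).isLeft := fun t ht => by
    simpa [Sum.isLeft_eq_false.mpr (hu _ ((Fin.zero_le t).trans_lt ht))] using hsides t _ ht
  choose R C hdiag hR hC using fun t => exists_entry_of_cobipGraph_adj hrow hcol (h.1 t)
  refine hasTriOfSize_of_lower R C hdiag fun t s hts => ?_
  have hnadj := (h.2 t s hts).2
  rwa [hR t (hv t (hts.trans_le (Fin.le_last s))),
    hC s (hu s ((Fin.zero_le t).trans_lt hts))] at hnadj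

lemma hasTriOfSize_of_isForcingChain (hrow : ∀ a, ∃ b, Y a b) (hcol : ∀ b, ∃ a, Y a b)
    {k : ℕ} {v u : Fin k → ρ ⊕ γ} (h : IsForcingChain (cobipGraph Y) v u) :
    HasTriOfSize Y k := by
  cases k with
  | zero => exact hasTriOfSize_zero_s12
  | succ k =>
    by_cases h0 : (v 0).isLeft
    · exact hasTriOfSize_of_isForcingChain_of_isLeft hrow hcol h h0
    · refine .of_flip (hasTriOfSize_of_isForcingChain_of_isLeft hcol hrow
        (h.map (cobipGraphIsoFlip Y).toEmbedding) ?_)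
      simpa [cobipGraphIsoFlip] using h0

lemma isGreatest_isForcingChain_cobipGraph [Finite ρ] (hrow : ∀ a, ∃ b, Y a b)
    (hcol : ∀ b, ∃ a, Y a b) :
    IsGreatest {k | ∃ v u : Fin k → ρ ⊕ γ, IsForcingChain (cobipGraph Y) v u} (tri Y) :=
  ⟨isGreatest_tri.1.exists_isForcingChain, fun _ ⟨_, _, h⟩ =>
    isGreatest_tri.2 (hasTriOfSize_of_isForcingChain hrow hcol h)⟩

end CobipGraph

section CobipAssociated

variable {m n : ℕ} {Y : Fin m → Fin n → Prop} {G : SimpleGraph V} {r : Fin m → V}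
  {c : Fin n → V}

lemma CobipAssociated.bijective_sumElim (h : CobipAssociated G Y r c) :
    Function.Bijective (Sum.elim r c) := by
  obtain ⟨⟨hr, hc, hrc, hcover, -⟩, -⟩ := h
  refine ⟨hr.sumElim hc hrc, fun x => ?_⟩
  rcases hcover x with ⟨i, rfl⟩ | ⟨j, rfl⟩
  exacts [⟨.inl i, rfl⟩, ⟨.inr j, rfl⟩]

noncomputable def CobipAssociated.iso (h : CobipAssociated G Y r c) : cobipGraph Y ≃g G where
  toEquiv := Equiv.ofBijective _ h.bijective_sumElim
  map_rel_iff' := by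
    obtain ⟨⟨hr, hc, -, -, hY⟩, hrows, hcols⟩ := h
    rintro (i | j) (i' | j')
    · exact ⟨fun hadj heq => hadj.ne (congrArg r heq),
        fun hne => hrows (Set.mem_range_self i) (Set.mem_range_self i') (hr.ne hne)⟩
    · exact hY i j'
    · exact G.adj_comm _ _ |>.trans (hY i' j)
    · exact ⟨fun hadj heq => hadj.ne (congrArg c heq),
        fun hne => hcols (Set.mem_range_self j) (Set.mem_range_self j') (hc.ne hne)⟩

end CobipAssociated

theorem Z_eq_of_cobip_saturated_general
    {V : Type*} {m n : ℕ} (Y : Fin m → Fin n → Prop)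
    (G : SimpleGraph V) (r : Fin m → V) (c : Fin n → V)
    (hassoc : CobipAssociated G Y r c)
    (hsat1 : ∀ i, ∃ j, G.Adj (r i) (c j)) (hsat2 : ∀ j, ∃ i, G.Adj (r i) (c j)) :
    Z G = m + n - tri Y := by
  have hY : ∀ i j, G.Adj (r i) (c j) ↔ Y i j := hassoc.1.2.2.2.2
  have hrow : ∀ i, ∃ j, Y i j := fun i => (hsat1 i).imp fun j => (hY i j).mp
  have hcol : ∀ j, ∃ i, Y i j := fun j => (hsat2 j).imp fun i => (hY i j).mp
  have : Finite V := .of_equiv _ hassoc.iso.toEquiv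
  have hcard : Nat.card V = m + n := by
    rw [← Nat.card_congr hassoc.iso.toEquiv, Nat.card_sum, Nat.card_fin, Nat.card_fin]
  rw [Z_eq_card_sub_of_isGreatest (setOf_isForcingChain_congr hassoc.iso ▸
    isGreatest_isForcingChain_cobipGraph hrow hcol), hcard]

/-- If `G` is the cobipartite graph associated with the `m × n`
pattern `Y` and is saturated with respect to the corresponding clique partition, then
`Z(G) = m + n − tri(Y)`. -/
theorem Z_eq_of_cobip_saturated
    {V : Type*} [Fintype V] [DecidableEq V] {m n : ℕ} (Y : Fin m → Fin n → Prop)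
    (G : SimpleGraph V) (r : Fin m → V) (c : Fin n → V)
    (hassoc : CobipAssociated G Y r c)
    (hsat1 : ∀ i, ∃ j, G.Adj (r i) (c j)) (hsat2 : ∀ j, ∃ i, G.Adj (r i) (c j)) :
    Z G = m + n - tri Y :=
  Z_eq_of_cobip_saturated_general Y G r c hassoc hsat1 hsat2
end

section
/- For every integer k ≥ 1, every k-tree that is cobipartite is a linear k-tree; that is, a cobipartite k-tree either is a (k+1)-clique or has exactly two vertices of degree k. -/
/-!  Common definitions: zero forcing (standard, loop, positive semidefinite),
zero-nonzero patterns, triangles, and related graph parameters. -/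

variable {V : Type*}

/-!
In a construction order of a `k`-tree, a vertex has degree `k` exactly when no vertex added
after it and after the initial clique is adjacent to it. Two such leaves are never adjacent
unless the graph is a single clique, because the vertex added right after the initial clique
misses only one vertex of it; a cobipartite graph, being covered by two cliques, therefore
has at most two leaves. Conversely, induction along the construction order gives two leaves:
the newest vertex is one, and since its earlier neighbours form a clique it cannot be adjacent
to both of two (non-adjacent) leaves of the graph built before it.
-/

theorem Equiv.ncard_setOf_val_lt {n m : ℕ} (e : V ≃ Fin n) (hm : m ≤ n) :
    {v | (e v : ℕ) < m}.ncard = m := by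
  classical
  have : {v | (e v : ℕ) < m} = e.symm '' ↑(Finset.univ.filter fun i : Fin n => (i : ℕ) < m) :=
    by ext v; simp
  rw [this, Set.ncard_image_of_injective _ e.symm.injective, Set.ncard_coe_finset,
    Fin.card_filter_val_lt, min_eq_right hm]

namespace SimpleGraph

variable {G : SimpleGraph V}

theorem IsIndepSet.ncard_le_two_of_cobipartite {s : Set V} (hs : G.IsIndepSet s)
    (hG : Cobipartite G) : s.ncard ≤ 2 := by
  obtain ⟨V₁, V₂, -, hcover, hV₁, hV₂⟩ := hG
  have hsub {C : Set V} (hC : G.IsClique C) : (s ∩ C).encard ≤ 1 :=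
    Set.encard_le_one_iff.2 fun a b ha hb => by
      by_contra hab
      exact hs ha.1 hb.1 hab (hC ha.2 hb.2 hab)
  have : s.encard ≤ 2 :=
    calc s.encard = (s ∩ V₁ ∪ s ∩ V₂).encard := by
          rw [← Set.inter_union_distrib_left, hcover, Set.inter_univ]
      _ ≤ (s ∩ V₁).encard + (s ∩ V₂).encard := Set.encard_union_le _ _
      _ ≤ 1 + 1 := add_le_add (hsub hV₁) (hsub hV₂)
      _ = 2 := one_add_one_eq_two
  exact (Set.encard_le_coe_iff_finite_ncard_le.1 this).2

variable {k n : ℕ} {e : V ≃ Fin n}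

def IsKTreeOrder (G : SimpleGraph V) (k : ℕ) (e : V ≃ Fin n) : Prop :=
  (∀ u v : V, (e u : ℕ) < k + 1 → (e v : ℕ) < k + 1 → u ≠ v → G.Adj u v) ∧
    ∀ v : V, k + 1 ≤ (e v : ℕ) →
      G.IsClique {u : V | (e u : ℕ) < (e v : ℕ) ∧ G.Adj u v} ∧
      {u : V | (e u : ℕ) < (e v : ℕ) ∧ G.Adj u v}.ncard = k

theorem isKTree_iff [Fintype V] : IsKTree k G ↔
    k + 1 ≤ Fintype.card V ∧ ∃ e : V ≃ Fin (Fintype.card V), G.IsKTreeOrder k e :=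
  Iff.rfl

/-- `v` is among the first `m` vertices of `e` and has degree `k` in the `k`-tree they span. -/
def IsLeafBefore (G : SimpleGraph V) (k : ℕ) (e : V ≃ Fin n) (m : ℕ) (v : V) : Prop :=
  (e v : ℕ) < m ∧
    ∀ u, G.Adj v u → k + 1 ≤ (e u : ℕ) → (e v : ℕ) < e u → m ≤ (e u : ℕ)

theorem isLeafBefore_succ_of_val_eq {m : ℕ} {z : V} (hz : (e z : ℕ) = m) :
    G.IsLeafBefore k e (m + 1) z :=
  ⟨by omega, fun _ _ _ h => by omega⟩

theorem IsLeafBefore.succ_of_not_adj {m : ℕ} {a z : V} (ha : G.IsLeafBefore k e m a)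
    (hz : (e z : ℕ) = m) (haz : ¬G.Adj a z) : G.IsLeafBefore k e (m + 1) a := by
  have ham := ha.1
  refine ⟨by omega, fun u hau hku hau' => ?_⟩
  have hmu := ha.2 u hau hku hau'
  by_contra hlt
  have hu : u = z := e.injective (Fin.ext (by omega))
  exact haz (hu ▸ hau)

theorem IsKTreeOrder.existsUnique_not_adj_of_val_eq (hT : G.IsKTreeOrder k e) {z : V}
    (hz : (e z : ℕ) = k + 1) : ∃! y, (e y : ℕ) < k + 1 ∧ ¬G.Adj y z := by
  have := Finite.of_equiv _ e.symm
  have hzn := (e z).2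
  have hcard : ({u | (e u : ℕ) < k + 1} \ {u | (e u : ℕ) < e z ∧ G.Adj u z}).ncard = 1 := by
    rw [Set.ncard_sdiff (fun u hu => hz ▸ hu.1), e.ncard_setOf_val_lt (by omega),
      (hT.2 z hz.ge).2, Nat.add_sub_cancel_left]
  obtain ⟨y, hy⟩ := Set.ncard_eq_one.1 hcard
  have hmem (u : V) : u = y ↔ (e u : ℕ) < k + 1 ∧ ¬G.Adj u z := by
    rw [← Set.mem_singleton_iff, ← hy]
    simp only [Set.mem_sdiff, Set.mem_ofPred_eq, hz]
    tauto
  exact ⟨y, (hmem y).1 rfl, fun u hu => (hmem u).2 hu⟩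

theorem IsKTreeOrder.not_adj_of_isLeafBefore (hT : G.IsKTreeOrder k e) {m : ℕ}
    (hkm : k + 2 ≤ m) (hmn : m ≤ n) {a b : V} (ha : G.IsLeafBefore k e m a)
    (hb : G.IsLeafBefore k e m b) (hab : a ≠ b) : ¬G.Adj a b := by
  wlog hlt : (e a : ℕ) < e b generalizing a b
  · have hne : (e a : ℕ) ≠ e b := fun h => hab (e.injective (Fin.ext h))
    exact fun hadj => this hb ha hab.symm (by omega) hadj.symm
  intro hadj
  by_cases hkb : k + 1 ≤ (e b : ℕ)
  · have := ha.2 b hadj hkb hlt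
    have := hb.1
    omega
  -- two leaves among the initial clique: the vertex added next misses at most one of them
  obtain ⟨z, hz⟩ : ∃ z, (e z : ℕ) = k + 1 := ⟨e.symm ⟨k + 1, by omega⟩, by simp⟩
  obtain ⟨y, -, hy⟩ := hT.existsUnique_not_adj_of_val_eq hz
  have : G.Adj a z ∨ G.Adj b z := by
    by_contra! h
    exact hab ((hy a ⟨by omega, h.1⟩).trans (hy b ⟨by omega, h.2⟩).symm)
  rcases this with h | h
  · have := ha.2 z h (by omega) (by omega)
    omega
  · have := hb.2 z h (by omega) (by omega)
    omega

theorem IsKTreeOrder.exists_pair_isLeafBefore (hT : G.IsKTreeOrder k e) {m : ℕ}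
    (hkm : k + 2 ≤ m) (hmn : m ≤ n) :
    ∃ a b, a ≠ b ∧ G.IsLeafBefore k e m a ∧ G.IsLeafBefore k e m b := by
  induction m, hkm using Nat.le_induction with
  | base =>
    obtain ⟨z, hz⟩ : ∃ z, (e z : ℕ) = k + 1 := ⟨e.symm ⟨k + 1, by omega⟩, by simp⟩
    obtain ⟨y, ⟨hy, hyz⟩, -⟩ := hT.existsUnique_not_adj_of_val_eq hz
    have hyleaf : G.IsLeafBefore k e (k + 1) y := ⟨hy, fun _ _ h _ => h⟩
    exact ⟨y, z, fun h => by subst h; omega, hyleaf.succ_of_not_adj hz hyz,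
      isLeafBefore_succ_of_val_eq hz⟩
  | succ m hkm ih =>
    obtain ⟨z, hz⟩ : ∃ z, (e z : ℕ) = m := ⟨e.symm ⟨m, by omega⟩, by simp⟩
    obtain ⟨a, b, hab, ha, hb⟩ := ih (by omega)
    have hzab : ¬G.Adj a z ∨ ¬G.Adj b z := by
      by_contra! h
      have hpa : a ∈ {u | (e u : ℕ) < e z ∧ G.Adj u z} := ⟨hz ▸ ha.1, h.1⟩
      have hpb : b ∈ {u | (e u : ℕ) < e z ∧ G.Adj u z} := ⟨hz ▸ hb.1, h.2⟩
      exact hT.not_adj_of_isLeafBefore hkm (by omega) ha hb hab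
        ((hT.2 z (by omega)).1 hpa hpb hab)
    have hne {x : V} (hx : G.IsLeafBefore k e m x) : x ≠ z := fun h => by
      have := hx.1
      subst h
      omega
    rcases hzab with h | h
    · exact ⟨a, z, hne ha, ha.succ_of_not_adj hz h, isLeafBefore_succ_of_val_eq hz⟩
    · exact ⟨b, z, hne hb, hb.succ_of_not_adj hz h, isLeafBefore_succ_of_val_eq hz⟩

theorem IsKTreeOrder.ncard_setOf_adj_and_lt (hT : G.IsKTreeOrder k e) (hkn : k + 1 ≤ n)
    (v : V) : {u | G.Adj v u ∧ ((e u : ℕ) < k + 1 ∨ (e u : ℕ) < e v)}.ncard = k := by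
  rcases lt_or_ge (e v : ℕ) (k + 1) with hv | hv
  · have : {u | G.Adj v u ∧ ((e u : ℕ) < k + 1 ∨ (e u : ℕ) < e v)} =
        {u | (e u : ℕ) < k + 1} \ {v} := by
      ext u
      simp only [Set.mem_sdiff, Set.mem_ofPred_eq, Set.mem_singleton_iff]
      constructor
      · rintro ⟨hadj, hu⟩
        exact ⟨by omega, hadj.ne.symm⟩
      · rintro ⟨hu, huv⟩
        exact ⟨hT.1 v u hv hu (Ne.symm huv), Or.inl hu⟩
    rw [this, Set.ncard_sdiff_singleton_of_mem (show v ∈ {u | (e u : ℕ) < k + 1} from hv),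
      e.ncard_setOf_val_lt hkn, Nat.add_sub_cancel]
  · refine Eq.trans ?_ (hT.2 v hv).2
    congr 1
    ext u
    simp only [Set.mem_ofPred_eq, G.adj_comm v u]
    constructor
    · rintro ⟨hadj, hu⟩
      exact ⟨by omega, hadj⟩
    · rintro ⟨hu, hadj⟩
      exact ⟨hadj, Or.inr hu⟩

theorem IsKTreeOrder.ncard_neighborSet_eq_iff (hT : G.IsKTreeOrder k e) (hkn : k + 1 ≤ n)
    (v : V) : (G.neighborSet v).ncard = k ↔ G.IsLeafBefore k e n v := by
  have := Finite.of_equiv _ e.symm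
  have hlow := hT.ncard_setOf_adj_and_lt hkn v
  set L := {u | G.Adj v u ∧ ((e u : ℕ) < k + 1 ∨ (e u : ℕ) < e v)}
  have hsub : L ⊆ G.neighborSet v := fun u hu => hu.1
  constructor
  · intro hdeg
    have heq := Set.eq_of_subset_of_ncard_le hsub (by rw [hdeg, hlow])
    refine ⟨(e v).2, fun u hu hku hvu => ?_⟩
    have := (heq ▸ hu : u ∈ L).2
    omega
  · rintro ⟨-, hleaf⟩
    rw [← hlow]
    congr 1
    refine (Set.Subset.antisymm hsub fun u hu => ⟨hu, ?_⟩).symm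
    by_contra! h
    have hvu : (e v : ℕ) ≠ e u := fun h => hu.ne (e.injective (Fin.ext h))
    have := hleaf u hu h.1 (by omega)
    omega

end SimpleGraph

theorem cobipartite_ktree_is_linear_general
    {V : Type*} [Fintype V] (k : ℕ)
    (G : SimpleGraph V) (hKT : IsKTree k G) (hco : Cobipartite G) :
    (Fintype.card V = k + 1 ∧ ∀ u v : V, u ≠ v → G.Adj u v) ∨
      {v : V | (G.neighborSet v).ncard = k}.ncard = 2 := by
  obtain ⟨hkn, e, hT⟩ := G.isKTree_iff.1 hKT
  rcases hkn.eq_or_lt with hcard | hcard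
  · exact Or.inl ⟨hcard.symm, fun u v =>
      hT.1 u v ((e u).2.trans_eq hcard.symm) ((e v).2.trans_eq hcard.symm)⟩
  have hleaves :
      {v | (G.neighborSet v).ncard = k} = {v | G.IsLeafBefore k e (Fintype.card V) v} :=
    Set.ext fun v => hT.ncard_neighborSet_eq_iff hkn v
  refine Or.inr (le_antisymm ?_ ?_)
  · rw [hleaves]
    exact SimpleGraph.IsIndepSet.ncard_le_two_of_cobipartite
      (fun a ha b hb hab => hT.not_adj_of_isLeafBefore hcard le_rfl ha hb hab) hco
  · obtain ⟨a, b, hab, ha, hb⟩ := hT.exists_pair_isLeafBefore hcard le_rfl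
    rw [hleaves, ← Set.ncard_pair hab]
    exact Set.ncard_le_ncard (Set.pair_subset ha hb)

/-- For `k ≥ 1`, every cobipartite `k`-tree is a linear `k`-tree:
it either is a `(k+1)`-clique or has exactly two vertices of degree `k`. -/
theorem cobipartite_ktree_is_linear
    {V : Type*} [Fintype V] [DecidableEq V] (k : ℕ) (hk : 1 ≤ k)
    (G : SimpleGraph V) (hKT : IsKTree k G) (hco : Cobipartite G) :
    (Fintype.card V = k + 1 ∧ ∀ u v : V, u ≠ v → G.Adj u v) ∨
      {v : V | (G.neighborSet v).ncard = k}.ncard = 2 :=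
  cobipartite_ktree_is_linear_general k G hKT hco
end
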